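/- Let G be a finite group, let g, h ∈ G with g ∉ N_G(⟨h⟩), and let m be the smallest positive integer such that g ∈ N_G(⟨h^m⟩). Let k be an integer with 1 ≤ k < o(h). If gcd(k,m) ≠ 1, then both Bovdi units b_k(g,h̃) = h^k + (1-h)·g·h̃ and b_k(h̃,g) = h^k + h̃·g·(1-h) have infinite order in the unit group U(ℤG). -/

import Mathlib

/-- `h̃ = ∑_{x ∈ ⟨h⟩} x` in the group ring `R G`, written as `∑_{i < o(h)} h^i`. -/
noncomputable def grpTilde (R : Type*) [CommRing R] {G : Type*} [Group G] (h : G) :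
    MonoidAlgebra R G :=
  ∑ i ∈ Finset.range (orderOf h), MonoidAlgebra.of R G (h ^ i)

/-- Bovdi unit `b_k(g, h̃) = h^k + (1 - h)·g·h̃`. -/
noncomputable def bovdiL (R : Type*) [CommRing R] {G : Type*} [Group G] (g h : G) (k : ℕ) :
    MonoidAlgebra R G :=
  MonoidAlgebra.of R G (h ^ k) +
    (1 - MonoidAlgebra.of R G h) * MonoidAlgebra.of R G g * grpTilde R h

/-- Bovdi unit `b_k(h̃, g) = h^k + h̃·g·(1 - h)`. -/
noncomputable def bovdiR (R : Type*) [CommRing R] {G : Type*} [Group G] (g h : G) (k : ℕ) :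
    MonoidAlgebra R G :=
  MonoidAlgebra.of R G (h ^ k) +
    grpTilde R h * MonoidAlgebra.of R G g * (1 - MonoidAlgebra.of R G h)

/-!
Write `b_k(g, h̃) = h^k + x` with `x = (1 - h)·g·h̃`. Since `h̃·(1 - h) = 0`, we have
`x² = 0` and `x·h^k = x`, so `b = (1 + x)·h^k` is a unit and `b^e = 1 + T·x`, where
`e = o(h^k)` and `T` is the sum of the elements of `⟨h^k⟩`. As `(1 + y)^n = 1 + n·y` when
`y² = 0`, and `ℤG` has no additive torsion, `b` can only have finite order if `T·x = 0`.

But the coefficient of `g` in `T·x = T·g·h̃ - T·hg·h̃` is the number of solutions of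
`h^{ki} g h^j = g`, which is positive, minus the number of solutions of `h^{ki+1} g h^j = g`,
which is zero: such a solution makes `g⁻¹` conjugate `h^{ki+1}` into `⟨h⟩`, hence also
`h^{gcd(ki+1, m)}`, and a conjugate of a power of `h` lying in the cyclic group `⟨h⟩` generates
the same subgroup as that power. So `g` normalizes `⟨h^{gcd(ki+1, m)}⟩`, minimality of `m` gives
`m ∣ ki + 1`, contradicting `gcd(k, m) ≠ 1`. The unit `b_k(h̃, g)` is the mirror image.
-/

open Finset Subgroup MonoidAlgebra

instance MonoidAlgebra.instIsAddTorsionFree {R M : Type*} [Semiring R] [IsAddTorsionFree R] :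
    IsAddTorsionFree (MonoidAlgebra R M) :=
  Function.Injective.isAddTorsionFree (coeffAddEquiv (R := R) (M := M)).toAddMonoidHom
    coeffAddEquiv.injective

theorem mul_pow_eq_self_of_mul_eq_self {M : Type*} [Monoid M] {x a : M} (h : x * a = x) (n : ℕ) :
    x * a ^ n = x := by
  induction n with
  | zero => rw [pow_zero, mul_one]
  | succ n ih => rw [pow_succ, ← mul_assoc, ih, h]

theorem pow_mul_eq_self_of_mul_eq_self {M : Type*} [Monoid M] {x a : M} (h : a * x = x) (n : ℕ) :
    a ^ n * x = x := by
  induction n with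
  | zero => rw [pow_zero, one_mul]
  | succ n ih => rw [pow_succ', mul_assoc, ih, h]

section SquareZero
variable {A : Type*} [Ring A] {a x : A}

theorem one_add_pow_of_mul_self_eq_zero (hx : x * x = 0) (n : ℕ) : (1 + x) ^ n = 1 + n • x := by
  induction n with
  | zero => simp
  | succ n ih =>
    rw [pow_succ, ih, succ_nsmul]
    simp only [mul_add, add_mul, mul_one, one_mul, smul_mul_assoc, hx, smul_zero, add_zero]
    abel

theorem eq_zero_of_isOfFinOrder_of_pow_eq_one_add [IsAddTorsionFree A] {b : A} {e : ℕ}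
    (hx : x * x = 0) (hb : b ^ e = 1 + x) (hfin : IsOfFinOrder b) : x = 0 := by
  obtain ⟨n, hn, hbn⟩ := isOfFinOrder_iff_pow_eq_one.mp (hfin.pow (n := e))
  rw [hb, one_add_pow_of_mul_self_eq_zero hx, add_eq_left] at hbn
  exact (smul_eq_zero.mp hbn).resolve_left hn.ne'

theorem isUnit_add_of_mul_self_eq_zero_of_mul_eq_self (ha : IsUnit a) (hx : x * x = 0)
    (hxa : x * a = x) : IsUnit (a + x) := by
  have hnil : IsNilpotent x := ⟨2, by rw [sq, hx]⟩
  simpa [add_mul, hxa, add_comm] using hnil.isUnit_one_add.mul ha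

theorem isUnit_add_of_mul_self_eq_zero_of_mul_eq_self' (ha : IsUnit a) (hx : x * x = 0)
    (hax : a * x = x) : IsUnit (a + x) := by
  have hnil : IsNilpotent x := ⟨2, by rw [sq, hx]⟩
  simpa [mul_add, hax] using ha.mul hnil.isUnit_one_add

theorem add_pow_of_mul_self_eq_zero_of_mul_eq_self (hx : x * x = 0) (hxa : x * a = x) (n : ℕ) :
    (a + x) ^ n = a ^ n + (∑ i ∈ range n, a ^ i) * x := by
  induction n with
  | zero => simp
  | succ n ih =>
    rw [pow_succ, ih, sum_range_succ]
    simp only [add_mul, mul_add, mul_assoc, hxa, hx, mul_zero, ← pow_succ]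
    abel

open MulOpposite in
theorem add_pow_of_mul_self_eq_zero_of_mul_eq_self' (hx : x * x = 0) (hax : a * x = x) (n : ℕ) :
    (a + x) ^ n = a ^ n + x * ∑ i ∈ range n, a ^ i := by
  apply MulOpposite.op_injective
  simpa [op_geom_sum] using add_pow_of_mul_self_eq_zero_of_mul_eq_self (a := op a) (x := op x)
    (by rw [← op_mul, hx, op_zero]) (by rw [← op_mul, hax]) n

theorem geom_sum_mul_eq_zero_of_isOfFinOrder_add [IsAddTorsionFree A] {e : ℕ} (hx : x * x = 0)
    (hxa : x * a = x) (ha : a ^ e = 1) (hfin : IsOfFinOrder (a + x)) :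
    (∑ i ∈ range e, a ^ i) * x = 0 := by
  have hxS : x * ∑ i ∈ range e, a ^ i = e • x := by
    simp [mul_sum, mul_pow_eq_self_of_mul_eq_self hxa]
  refine eq_zero_of_isOfFinOrder_of_pow_eq_one_add (e := e) ?_ ?_ hfin
  · rw [mul_assoc, ← mul_assoc x, hxS, smul_mul_assoc, hx, smul_zero, mul_zero]
  · rw [add_pow_of_mul_self_eq_zero_of_mul_eq_self hx hxa, ha]

theorem mul_geom_sum_eq_zero_of_isOfFinOrder_add [IsAddTorsionFree A] {e : ℕ} (hx : x * x = 0)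
    (hax : a * x = x) (ha : a ^ e = 1) (hfin : IsOfFinOrder (a + x)) :
    x * ∑ i ∈ range e, a ^ i = 0 := by
  have hSx : (∑ i ∈ range e, a ^ i) * x = e • x := by
    simp [sum_mul, pow_mul_eq_self_of_mul_eq_self hax]
  refine eq_zero_of_isOfFinOrder_of_pow_eq_one_add (e := e) ?_ ?_ hfin
  · rw [mul_assoc, ← mul_assoc _ x, hSx, smul_mul_assoc, mul_smul_comm, ← mul_assoc, hx,
      zero_mul, smul_zero]
  · rw [add_pow_of_mul_self_eq_zero_of_mul_eq_self' hx hax, ha]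

end SquareZero

section GrpTilde
variable {R : Type*} [CommRing R] {G : Type*} [Group G]

theorem grpTilde_eq_geom_sum (h : G) :
    grpTilde R h = ∑ i ∈ range (orderOf h), of R G h ^ i := by
  simp only [grpTilde, map_pow]

theorem grpTilde_mul_one_sub_of (h : G) : grpTilde R h * (1 - of R G h) = 0 := by
  rw [grpTilde_eq_geom_sum, geom_sum_mul_neg, ← map_pow, pow_orderOf_eq_one, map_one, sub_self]

theorem one_sub_of_mul_grpTilde (h : G) : (1 - of R G h) * grpTilde R h = 0 := by
  rw [grpTilde_eq_geom_sum, mul_neg_geom_sum, ← map_pow, pow_orderOf_eq_one, map_one, sub_self]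

theorem grpTilde_mul_of (h : G) : grpTilde R h * of R G h = grpTilde R h := by
  simpa [mul_sub, sub_eq_zero, eq_comm] using grpTilde_mul_one_sub_of (R := R) h

theorem of_mul_grpTilde (h : G) : of R G h * grpTilde R h = grpTilde R h := by
  simpa [sub_mul, sub_eq_zero, eq_comm] using one_sub_of_mul_grpTilde (R := R) h

theorem coeff_grpTilde_mul_of_mul_grpTilde [DecidableEq G] (w c v z : G) :
    (grpTilde R w * of R G c * grpTilde R v).coeff z =
      #{p ∈ range (orderOf w) ×ˢ range (orderOf v) | w ^ p.1 * c * v ^ p.2 = z} := by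
  rw [grpTilde, grpTilde, sum_mul, sum_mul_sum, ← sum_product']
  simp only [← map_mul, coeff_sum, Finsupp.finsetSum_apply]
  simp only [of_apply, coeff_single, Finsupp.single_apply]
  rw [sum_boole]

theorem grpTilde_mul_sub_mul_grpTilde_ne_zero [Finite G] [CharZero R] {w v c c' : G}
    (hc' : ∀ i j : ℕ, w ^ i * c' * v ^ j ≠ c) :
    grpTilde R w * (of R G c - of R G c') * grpTilde R v ≠ 0 := by
  classical
  intro h0
  rw [mul_sub, sub_mul, sub_eq_zero] at h0
  have hcoeff := congrArg (fun f => f.coeff c) h0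
  simp only [coeff_grpTilde_mul_of_mul_grpTilde, Nat.cast_inj, hc', filter_false, card_empty,
    card_eq_zero, filter_eq_empty_iff] at hcoeff
  exact hcoeff (x := (0, 0))
    (mem_product.mpr ⟨mem_range.mpr (orderOf_pos w), mem_range.mpr (orderOf_pos v)⟩) (by simp)

end GrpTilde

section Normalizer
variable {G : Type*} [Group G]

theorem pow_mem_zpowers_pow_of_gcd_dvd (h : G) {d s : ℕ} (hs : (orderOf h).gcd d ∣ s) :
    h ^ s ∈ zpowers (h ^ d) := by
  obtain ⟨q, rfl⟩ := hs
  rw [pow_mul]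
  refine pow_mem ?_ q
  have hgcd : h ^ (orderOf h).gcd d = (h ^ d) ^ (orderOf h).gcdB d := by
    rw [← zpow_natCast, Nat.gcd_eq_gcd_ab, zpow_add, zpow_mul, zpow_natCast, pow_orderOf_eq_one,
      one_zpow, one_mul, zpow_mul, zpow_natCast]
  rw [hgcd]
  exact zpow_mem_zpowers _ _

variable [Finite G]

theorem zpowers_eq_zpowers_pow_of_orderOf_eq {h x : G} {d : ℕ} (hx : x ∈ zpowers h)
    (hord : orderOf x = orderOf (h ^ d)) : zpowers x = zpowers (h ^ d) := by
  obtain ⟨s, rfl⟩ := (mem_powers_iff_mem_zpowers.mpr hx : x ∈ Submonoid.powers h)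
  have hgcd : (orderOf h).gcd s = (orderOf h).gcd d := by
    rw [orderOf_pow, orderOf_pow] at hord
    rw [← Nat.div_div_self (Nat.gcd_dvd_left _ s) (orderOf_pos h).ne', hord,
      Nat.div_div_self (Nat.gcd_dvd_left _ d) (orderOf_pos h).ne']
  refine eq_of_le_of_card_ge (zpowers_le.mpr ?_) ?_
  · exact pow_mem_zpowers_pow_of_gcd_dvd h (hgcd ▸ Nat.gcd_dvd_right _ s)
  · rw [Nat.card_zpowers, Nat.card_zpowers, hord]

theorem mem_normalizer_zpowers_pow_of_conj_mem {g h : G} {d : ℕ}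
    (hd : g * h ^ d * g⁻¹ ∈ zpowers h) : g ∈ normalizer (zpowers (h ^ d) : Set G) := by
  rw [mem_normalizer_iff_map_conj_eq, MonoidHom.map_zpowers]
  exact zpowers_eq_zpowers_pow_of_orderOf_eq (by simpa using hd) (MulEquiv.orderOf_eq _ _)

theorem dvd_of_conj_pow_mem {g h : G} {m t : ℕ} (hm : 0 < m)
    (hgm : g ∈ normalizer (zpowers (h ^ m) : Set G))
    (hmin : ∀ m' : ℕ, 0 < m' → g ∈ normalizer (zpowers (h ^ m') : Set G) → m ≤ m')
    (ht : g * h ^ t * g⁻¹ ∈ zpowers h) : m ∣ t := by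
  have hconj_m : g * h ^ m * g⁻¹ ∈ zpowers h :=
    zpowers_le.mpr (npow_mem_zpowers h m) ((mem_normalizer_iff.mp hgm _).mp (mem_zpowers _))
  have hconj_gcd : g * h ^ t.gcd m * g⁻¹ ∈ zpowers h := by
    have : g * h ^ t.gcd m * g⁻¹ =
        (g * h ^ t * g⁻¹) ^ t.gcdA m * (g * h ^ m * g⁻¹) ^ t.gcdB m := by
      rw [conj_zpow, conj_zpow, ← zpow_natCast, Nat.gcd_eq_gcd_ab, zpow_add, zpow_mul, zpow_mul,
        zpow_natCast, zpow_natCast]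
      simp only [mul_assoc, inv_mul_cancel_left]
    rw [this]
    exact mul_mem (zpow_mem ht _) (zpow_mem hconj_m _)
  have hgcd : t.gcd m = m :=
    le_antisymm (Nat.le_of_dvd hm (Nat.gcd_dvd_right t m))
      (hmin _ (Nat.gcd_pos_of_pos_right t hm) (mem_normalizer_zpowers_pow_of_conj_mem hconj_gcd))
  exact hgcd ▸ Nat.gcd_dvd_left t m

end Normalizer

theorem Nat.gcd_eq_one_of_dvd_mul_add_one {k m i : ℕ} (h : m ∣ k * i + 1) : k.gcd m = 1 :=
  Nat.dvd_one.mp <| (Nat.dvd_add_right ((Nat.gcd_dvd_left k m).mul_right i)).mp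
    ((Nat.gcd_dvd_right k m).trans h)

section Bovdi
variable {R : Type*} [CommRing R] {G : Type*} [Group G] (g h : G) (k : ℕ)

noncomputable def bovdiNilL (R : Type*) [CommRing R] {G : Type*} [Group G] (g h : G) :
    MonoidAlgebra R G :=
  (1 - of R G h) * of R G g * grpTilde R h

noncomputable def bovdiNilR (R : Type*) [CommRing R] {G : Type*} [Group G] (g h : G) :
    MonoidAlgebra R G :=
  grpTilde R h * of R G g * (1 - of R G h)

theorem bovdiNilL_mul_self : bovdiNilL R g h * bovdiNilL R g h = 0 := by
  simp only [bovdiNilL, mul_assoc, ← mul_assoc (grpTilde R h), grpTilde_mul_one_sub_of, zero_mul,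
    mul_zero]

theorem bovdiNilR_mul_self : bovdiNilR R g h * bovdiNilR R g h = 0 := by
  simp only [bovdiNilR, mul_assoc, ← mul_assoc (1 - of R G h), one_sub_of_mul_grpTilde, zero_mul,
    mul_zero]

theorem bovdiNilL_mul_of_pow : bovdiNilL R g h * of R G (h ^ k) = bovdiNilL R g h := by
  rw [bovdiNilL, mul_assoc, map_pow, mul_pow_eq_self_of_mul_eq_self (grpTilde_mul_of h)]

theorem of_pow_mul_bovdiNilR : of R G (h ^ k) * bovdiNilR R g h = bovdiNilR R g h := by
  rw [bovdiNilR, ← mul_assoc, ← mul_assoc, map_pow,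
    pow_mul_eq_self_of_mul_eq_self (of_mul_grpTilde h)]

theorem isUnit_bovdiL : IsUnit (bovdiL R g h k) :=
  isUnit_add_of_mul_self_eq_zero_of_mul_eq_self ((Group.isUnit _).map (of R G))
    (bovdiNilL_mul_self g h) (bovdiNilL_mul_of_pow g h k)

theorem isUnit_bovdiR : IsUnit (bovdiR R g h k) :=
  isUnit_add_of_mul_self_eq_zero_of_mul_eq_self' ((Group.isUnit _).map (of R G))
    (bovdiNilR_mul_self g h) (of_pow_mul_bovdiNilR g h k)

theorem grpTilde_pow_mul_bovdiNilL_eq_zero [IsAddTorsionFree R]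
    (hfin : IsOfFinOrder (bovdiL R g h k)) : grpTilde R (h ^ k) * bovdiNilL R g h = 0 := by
  rw [grpTilde_eq_geom_sum]
  exact geom_sum_mul_eq_zero_of_isOfFinOrder_add (bovdiNilL_mul_self g h)
    (bovdiNilL_mul_of_pow g h k) (by rw [← map_pow, pow_orderOf_eq_one, map_one]) hfin

theorem bovdiNilR_mul_grpTilde_pow_eq_zero [IsAddTorsionFree R]
    (hfin : IsOfFinOrder (bovdiR R g h k)) : bovdiNilR R g h * grpTilde R (h ^ k) = 0 := by
  rw [grpTilde_eq_geom_sum]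
  exact mul_geom_sum_eq_zero_of_isOfFinOrder_add (bovdiNilR_mul_self g h)
    (of_pow_mul_bovdiNilR g h k) (by rw [← map_pow, pow_orderOf_eq_one, map_one]) hfin

variable [Finite G] [CharZero R] {g h k} {m : ℕ}

theorem grpTilde_pow_mul_bovdiNilL_ne_zero (hgcd : k.gcd m ≠ 1)
    (hdvd : ∀ t : ℕ, g⁻¹ * h ^ t * g ∈ zpowers h → m ∣ t) :
    grpTilde R (h ^ k) * bovdiNilL R g h ≠ 0 := by
  have : grpTilde R (h ^ k) * bovdiNilL R g h =
      grpTilde R (h ^ k) * (of R G g - of R G (h * g)) * grpTilde R h := by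
    rw [bovdiNilL, map_mul]; noncomm_ring
  rw [this]
  refine grpTilde_mul_sub_mul_grpTilde_ne_zero fun i j heq => hgcd ?_
  refine Nat.gcd_eq_one_of_dvd_mul_add_one (i := i) (hdvd _ ?_)
  have : g⁻¹ * h ^ (k * i + 1) * g = (h ^ j)⁻¹ :=
    calc g⁻¹ * h ^ (k * i + 1) * g
        _ = g⁻¹ * ((h ^ k) ^ i * (h * g) * h ^ j) * (h ^ j)⁻¹ := by
          rw [pow_succ, pow_mul]; group
        _ = (h ^ j)⁻¹ := by rw [heq, inv_mul_cancel, one_mul]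
  rw [this]
  exact inv_mem (npow_mem_zpowers h j)

theorem bovdiNilR_mul_grpTilde_pow_ne_zero (hgcd : k.gcd m ≠ 1)
    (hdvd : ∀ t : ℕ, g * h ^ t * g⁻¹ ∈ zpowers h → m ∣ t) :
    bovdiNilR R g h * grpTilde R (h ^ k) ≠ 0 := by
  have : bovdiNilR R g h * grpTilde R (h ^ k) =
      grpTilde R h * (of R G g - of R G (g * h)) * grpTilde R (h ^ k) := by
    rw [bovdiNilR, map_mul]; noncomm_ring
  rw [this]
  refine grpTilde_mul_sub_mul_grpTilde_ne_zero fun i j heq => hgcd ?_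
  refine Nat.gcd_eq_one_of_dvd_mul_add_one (i := j) (hdvd _ ?_)
  have : g * h ^ (k * j + 1) * g⁻¹ = (h ^ i)⁻¹ :=
    calc g * h ^ (k * j + 1) * g⁻¹
        _ = (h ^ i)⁻¹ * (h ^ i * (g * h) * (h ^ k) ^ j) * g⁻¹ := by
          rw [pow_succ', pow_mul]; group
        _ = (h ^ i)⁻¹ := by rw [heq, mul_inv_cancel_right]
  rw [this]
  exact inv_mem (npow_mem_zpowers h i)

end Bovdi

theorem stmt_6_general {G : Type*} [Group G] [Fintype G] (g h : G)
    (m : ℕ) (hm : 0 < m) (hgm : g ∈ Subgroup.normalizer (Subgroup.zpowers (h ^ m) : Set G))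
    (hmin : ∀ m' : ℕ, 0 < m' → g ∈ Subgroup.normalizer (Subgroup.zpowers (h ^ m') : Set G) → m ≤ m')
    (k : ℕ) (hgcd : Nat.gcd k m ≠ 1) :
    IsUnit (bovdiL ℤ g h k) ∧ IsUnit (bovdiR ℤ g h k) ∧
      ∀ u : (MonoidAlgebra ℤ G)ˣ,
        ((↑u : MonoidAlgebra ℤ G) = bovdiL ℤ g h k ∨
          (↑u : MonoidAlgebra ℤ G) = bovdiR ℤ g h k) →
        ¬ IsOfFinOrder u := by
  have hdvd (t : ℕ) : g * h ^ t * g⁻¹ ∈ zpowers h → m ∣ t :=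
    dvd_of_conj_pow_mem hm hgm hmin
  have hdvd_inv (t : ℕ) (ht : g⁻¹ * h ^ t * g ∈ zpowers h) : m ∣ t :=
    dvd_of_conj_pow_mem hm (inv_mem hgm)
      (fun m' hm' hg' => hmin m' hm' (by simpa using inv_mem hg')) (by simpa using ht)
  refine ⟨isUnit_bovdiL g h k, isUnit_bovdiR g h k, ?_⟩
  rintro u (hu | hu) hfin <;> rw [← Units.isOfFinOrder_val, hu] at hfin
  · exact grpTilde_pow_mul_bovdiNilL_ne_zero hgcd hdvd_inv
      (grpTilde_pow_mul_bovdiNilL_eq_zero g h k hfin)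
  · exact bovdiNilR_mul_grpTilde_pow_ne_zero hgcd hdvd
      (bovdiNilR_mul_grpTilde_pow_eq_zero g h k hfin)

/-- Lemma 3.1(2): if `g ∉ N_G(⟨h⟩)`, `m` is the smallest positive integer with
`g ∈ N_G(⟨h^m⟩)`, `1 ≤ k < o(h)` and `gcd(k,m) ≠ 1`, then the Bovdi units `b_k(g,h̃)` and
`b_k(h̃,g)` are units of `ℤG` of infinite order. -/
theorem stmt_6 {G : Type*} [Group G] [Fintype G] (g h : G)
    (hg : g ∉ Subgroup.normalizer (Subgroup.zpowers h : Set G))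
    (m : ℕ) (hm : 0 < m) (hgm : g ∈ Subgroup.normalizer (Subgroup.zpowers (h ^ m) : Set G))
    (hmin : ∀ m' : ℕ, 0 < m' → g ∈ Subgroup.normalizer (Subgroup.zpowers (h ^ m') : Set G) → m ≤ m')
    (k : ℕ) (hk1 : 1 ≤ k) (hk2 : k < orderOf h)
    (hgcd : Nat.gcd k m ≠ 1) :
    IsUnit (bovdiL ℤ g h k) ∧ IsUnit (bovdiR ℤ g h k) ∧
      ∀ u : (MonoidAlgebra ℤ G)ˣ,
        ((↑u : MonoidAlgebra ℤ G) = bovdiL ℤ g h k ∨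
          (↑u : MonoidAlgebra ℤ G) = bovdiR ℤ g h k) →
        ¬ IsOfFinOrder u :=
  stmt_6_general g h m hm hgm hmin k hgcd
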